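/- With $\Sigma$ and the path sums as above, the key inductive identity holds: for all $1 \le l \le k < l+m \le n+1$, $x^{(l)}_m = X^{(l)}_m(x) \cdot Y^{*(l-1)}_m(\Sigma(x))$. -/

import Mathlib

/- Lattice-path combinatorics on the weighted lattice `L₁[n,k]`.

A shortest path from `(l,m)` to `(1,n)` is encoded by the strictly increasing
sequence `c : Fin (l+1) → Fin (n+2)` of its run boundaries: the horizontal run
on level `l - j` goes from column `c j` to column `c (j+1) - 1`, followed by a
diagonal step to `(l - j - 1, c (j+1))`.  The weight of a path is the product
over its horizontal runs of `x_{i,start}/x_{i,end}` (the product of the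
horizontal strip weights `x_{i,j}/x_{i,j+1}`, which telescopes). -/

attribute [local instance] Classical.propDecidable

noncomputable section

/-- Shortest partial paths from `(l,m)` to `(1,n)` on `L₁[n,k]`. -/
def pathsX (n l m : ℕ) : Finset (Fin (l + 1) → Fin (n + 2)) :=
  Finset.univ.filter fun c =>
    (c 0 : ℕ) = m ∧ StrictMono c ∧ (c (Fin.last l) : ℕ) = n + 1

/-- The weight of a path. -/
def wtX (x : ℕ → ℕ → ℚ) (l : ℕ) {n : ℕ} (c : Fin (l + 1) → Fin (n + 2)) : ℚ :=
  ∏ j : Fin l, x (l - (j : ℕ)) (c j.castSucc) / x (l - (j : ℕ)) ((c j.succ : ℕ) - 1)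

/-- `X^{(l)}_m`: the sum of the weights of all shortest paths from `(l,m)` to `(1,n)`. -/
def Xsum (x : ℕ → ℕ → ℚ) (n l m : ℕ) : ℚ :=
  ∑ c ∈ pathsX n l m, wtX x l c


/-- `X^{(l)}_m` with the boundary conventions `X^{(l)}_m = 1/x^{(1)}_n` when
`l + m = k`, and `X^{(k+1)}_m = 1`. -/
def XE (x : ℕ → ℕ → ℚ) (n k l m : ℕ) : ℚ :=
  if k < l then 1 else if l + m = k then (x 1 n)⁻¹ else Xsum x n l m

/-- The rational map `Σ : x ↦ y`, `y^{(l)}_m = x^{(l+1)}_m ⬝ X^{(l)}_m(x)/X^{(l+1)}_m(x)`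
(with the convention `x^{(k+1)}_m = 1`). -/
def SigmaMap (x : ℕ → ℕ → ℚ) (n k : ℕ) : ℕ → ℕ → ℚ := fun l m =>
  (if l + 1 ≤ k then x (l + 1) m else 1) * (XE x n k l m / XE x n k (l + 1) m)

/-- Shortest partial paths on the lattice `L₂[n,k]` from `(k,0)` to `(l,m)`,
encoded by their run boundaries `c : Fin (k-l+1) → Fin (n+2)` with `c 0 = 0`:
the run at level `k - j` starts at column `c (j+1)`, reached by a vertical
(diagonal) strip from `(k - j + 1, c (j+1) - 1)`. -/
def pathsY (n k l m : ℕ) : Finset (Fin (k - l + 1) → Fin (n + 2)) :=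
  Finset.univ.filter fun c =>
    (c 0 : ℕ) = 0 ∧ StrictMono c ∧ (c (Fin.last (k - l)) : ℕ) ≤ m

/-- The weight of a partial path on `L₂[n,k]`: the product of the weights
`y_{i-1,j+1}/y_{i,j}` of its vertical strips `(i,j)–(i-1,j+1)`. -/
def wtY (y : ℕ → ℕ → ℚ) (k l : ℕ) {n : ℕ} (c : Fin (k - l + 1) → Fin (n + 2)) : ℚ :=
  ∏ j : Fin (k - l),
    y (k - (j : ℕ) - 1) (c j.succ) / y (k - (j : ℕ)) ((c j.succ : ℕ) - 1)

/-- `Y^{*(l)}_m(y)`: the sum of the weights of all shortest partial paths on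
`L₂[n,k]` from `(k,0)` to `(l,m)`. -/
def YstarSum (y : ℕ → ℕ → ℚ) (n k l m : ℕ) : ℚ :=
  ∑ c ∈ pathsY n k l m, wtY y k l c

/-- `Y^{*(l)}_m` with the boundary convention `Y^{*(0)}_m = 1/y^{(k)}_0`. -/
def YstarE (y : ℕ → ℕ → ℚ) (n k l m : ℕ) : ℚ :=
  if l = 0 then (y k 0)⁻¹ else YstarSum y n k l m

/-- The rational map `Ξ : y ↦ x`, `x^{(l)}_m = y^{(l)}_m ⬝ Y^{*(l-1)}_m(y)/Y^{*(l)}_m(y)`. -/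
def XiMap (y : ℕ → ℕ → ℚ) (n k : ℕ) : ℕ → ℕ → ℚ := fun l m =>
  y l m * (YstarE y n k (l - 1) m / YstarE y n k l m)

open Finset

/-!
Both path sums satisfy first-step recursions. Cutting a path on `L₁[n,k]` after its first
horizontal run gives `X^{(l)}_m = X^{(l-1)}_{m+1} + (x^{(l)}_m / x^{(l)}_{m+1}) X^{(l)}_{m+1}`;
cutting a path on `L₂[n,k]` before its last vertical strip gives
`Y^{*(l)}_m(y) = ∑_j (y^{(l)}_j / y^{(l+1)}_{j-1}) Y^{*(l+1)}_{j-1}(y)`.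
For `y = Σ(x)` and `1 ≤ l ≤ k` one shows `Y^{*(l)}_m(y) = y^{(l)}_m / X^{(l)}_m` by downward
induction on `l`: the induction hypothesis turns the sum into `∑_j y^{(l)}_j / X^{(l+1)}_{j-1}`,
which telescopes by the first recursion to `x^{(l+1)}_m / X^{(l+1)}_m`, and this equals
`y^{(l)}_m / X^{(l)}_m` by the definition of `Σ`. Read at level `l - 1`, this is the identity;
for `l = 1` the boundary conventions give `Y^{*(0)}_m = x^{(1)}_n` and
`X^{(1)}_m = x^{(1)}_m / x^{(1)}_n`.
-/

theorem Fin.val_add_sub_le_of_strictMono {N M : ℕ} {c : Fin N → Fin M} (hc : StrictMono c)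
    {a b : Fin N} (hab : a ≤ b) : (c a : ℕ) + ((b : ℕ) - a) ≤ c b := by
  obtain ⟨b, hb⟩ := b
  change (a : ℕ) ≤ b at hab
  revert hb
  induction b, hab using Nat.le_induction with
  | base => simp
  | succ b hab ih =>
    intro hb
    have hlt : c ⟨b, by omega⟩ < c ⟨b + 1, hb⟩ := hc (Fin.mk_lt_mk.2 (by omega))
    have := ih (by omega)
    rw [Fin.lt_def] at hlt
    simp only at this ⊢
    omega

theorem wtX_cons (x : ℕ → ℕ → ℚ) {n L : ℕ} (a : Fin (n + 2)) (d : Fin (L + 1) → Fin (n + 2)) :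
    wtX x (L + 1) (Fin.cons a d : Fin (L + 2) → Fin (n + 2))
      = x (L + 1) a / x (L + 1) ((d 0 : ℕ) - 1) * wtX x L d := by
  simp [wtX, Fin.prod_univ_succ, mul_div_mul_comm]

theorem cons_mem_pathsX {n L m : ℕ} {a : Fin (n + 2)} {d : Fin (L + 1) → Fin (n + 2)} :
    (Fin.cons a d : Fin (L + 2) → Fin (n + 2)) ∈ pathsX n (L + 1) m
      ↔ (a : ℕ) = m ∧ a < d 0 ∧ d ∈ pathsX n L (d 0) := by
  simp only [pathsX, mem_filter, mem_univ, true_and, Fin.cons_zero, Fin.strictMono_cons,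
    Fin.cons_last]
  refine and_congr_right fun _ => ⟨fun ⟨⟨ha, hd⟩, hl⟩ => ⟨ha 0, hd, hl⟩, fun ⟨ha, hd, hl⟩ => ?_⟩
  exact ⟨⟨fun j => ha.trans_le (hd.monotone (Fin.zero_le j)), hd⟩, hl⟩

theorem pathsX_zero (n b : ℕ) :
    pathsX n 0 b = if b = n + 1 then {fun _ => Fin.last (n + 1)} else ∅ := by
  ext c
  split_ifs with h <;>
    simp [pathsX, Subsingleton.strictMono, h, funext_iff, Fin.forall_fin_one, Fin.ext_iff]
  omega

theorem mem_pathsX_succ {n L m : ℕ} {c : Fin (L + 2) → Fin (n + 2)} :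
    c ∈ pathsX n (L + 1) m ↔ (c 0 : ℕ) = m ∧ c 0 < c 1 ∧ Fin.tail c ∈ pathsX n L (c 1) := by
  rw [← Fin.cons_self_tail c, cons_mem_pathsX]
  rfl

theorem Xsum_succ (x : ℕ → ℕ → ℚ) {n L m : ℕ} (hm : m ≤ n + 1) :
    Xsum x n (L + 1) m
      = ∑ b ∈ Ioc m (n + 1), x (L + 1) m / x (L + 1) (b - 1) * Xsum x n L b := by
  have first_step_mem : ∀ c ∈ pathsX n (L + 1) m, (c 1 : ℕ) ∈ Ioc m (n + 1) := by
    intro c hc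
    obtain ⟨h0, h01, -⟩ := mem_pathsX_succ.1 hc
    rw [Fin.lt_def] at h01
    have := (c 1).isLt
    exact mem_Ioc.2 ⟨by omega, by omega⟩
  rw [Xsum, ← sum_fiberwise_of_maps_to first_step_mem]
  refine sum_congr rfl fun b hb => ?_
  rw [Xsum, mul_sum]
  have hm' : m < n + 2 := by omega
  refine sum_nbij' Fin.tail (fun d => Fin.cons (⟨m, hm'⟩ : Fin (n + 2)) d) ?_ ?_ ?_ ?_ ?_
  · intro c hc
    obtain ⟨hpath, rfl⟩ := mem_filter.1 hc
    exact (mem_pathsX_succ.1 hpath).2.2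
  · intro d hd
    have hb := mem_Ioc.1 hb
    have hd0 : (d 0 : ℕ) = b := (mem_filter.1 hd).2.1
    refine mem_filter.2 ⟨cons_mem_pathsX.2 ⟨rfl, ?_, ?_⟩, hd0⟩
    · rw [Fin.lt_def]; simp only; omega
    · rwa [hd0]
  · intro c hc
    obtain ⟨hpath, -⟩ := mem_filter.1 hc
    conv_rhs => rw [← Fin.cons_self_tail c]
    congr 1
    exact Fin.ext (mem_pathsX_succ.1 hpath).1.symm
  · intro d _
    exact Fin.tail_cons _ _
  · intro c hc
    obtain ⟨hpath, rfl⟩ := mem_filter.1 hc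
    conv_lhs => rw [← Fin.cons_self_tail c]
    rw [wtX_cons, (mem_pathsX_succ.1 hpath).1, Fin.tail, Fin.succ_zero_eq_one]

theorem pathsX_succ_nonempty {n : ℕ} : ∀ {L m : ℕ}, m + L < n + 1 →
    (pathsX n (L + 1) m).Nonempty
  | 0, m, h => by
    refine ⟨Fin.cons ⟨m, by omega⟩ fun _ => Fin.last (n + 1), cons_mem_pathsX.2 ⟨rfl, ?_, ?_⟩⟩
    · rw [Fin.lt_def]; simp only [Fin.val_last]; omega
    · simp [pathsX_zero]
  | L + 1, m, h => by
    obtain ⟨d, hd⟩ := @pathsX_succ_nonempty n L (m + 1) (by omega)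
    have hd0 : (d 0 : ℕ) = m + 1 := (mem_filter.1 hd).2.1
    refine ⟨Fin.cons ⟨m, by omega⟩ d, cons_mem_pathsX.2 ⟨rfl, ?_, by rwa [hd0]⟩⟩
    rw [Fin.lt_def, hd0]; exact Nat.lt_succ_self m

theorem Xsum_zero (x : ℕ → ℕ → ℚ) (n b : ℕ) : Xsum x n 0 b = if b = n + 1 then 1 else 0 := by
  rw [Xsum, pathsX_zero]
  split_ifs <;> simp [wtX]

theorem Xsum_one (x : ℕ → ℕ → ℚ) {n m : ℕ} (hm : m ≤ n) : Xsum x n 1 m = x 1 m / x 1 n := by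
  rw [Xsum_succ x (by omega), sum_eq_single (n + 1)]
  · simp [Xsum_zero]
  · intro b _ hb
    simp [Xsum_zero, hb]
  · intro h
    exact absurd (mem_Ioc.2 ⟨by omega, le_rfl⟩) h

theorem Xsum_succ_eq_add (x : ℕ → ℕ → ℚ) {n L m : ℕ} (hm : m + 1 ≤ n + 1)
    (h0 : x (L + 1) m ≠ 0) (h1 : x (L + 1) (m + 1) ≠ 0) :
    Xsum x n (L + 1) m
      = Xsum x n L (m + 1) + x (L + 1) m / x (L + 1) (m + 1) * Xsum x n (L + 1) (m + 1) := by
  rw [Xsum_succ x (by omega), Xsum_succ x hm, mul_sum, ← Icc_add_one_left_eq_Ioc,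
    Icc_eq_cons_Ioc hm, sum_cons, Nat.add_sub_cancel, div_self h0, one_mul]
  congr 1
  refine sum_congr rfl fun b _ => ?_
  rw [← mul_assoc, div_mul_div_cancel₀ h1]

/-- The weights are positive on the vertices `(l, m)` of `L₁[n,k]`. -/
def PositiveOnLattice (n k : ℕ) (x : ℕ → ℕ → ℚ) : Prop :=
  ∀ l m, 1 ≤ l → l ≤ k → k < l + m → l + m ≤ n + 1 → 0 < x l m

theorem wtX_pos {n k l m : ℕ} {x : ℕ → ℕ → ℚ} (hx : PositiveOnLattice n k x) (hl : l ≤ k)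
    (hkm : k < l + m) {c : Fin (l + 1) → Fin (n + 2)} (hc : c ∈ pathsX n l m) :
    0 < wtX x l c := by
  obtain ⟨h0, hmono, hlast⟩ := (mem_filter.1 hc).2
  refine prod_pos fun i _ => div_pos ?_ ?_
  all_goals
    have hlo := Fin.val_add_sub_le_of_strictMono hmono (Fin.zero_le i.castSucc)
    have hhi := Fin.val_add_sub_le_of_strictMono hmono (Fin.le_last i.succ)
    have hstep := hmono i.castSucc_lt_succ
    simp only [Fin.lt_def, Fin.val_last, Fin.val_castSucc, Fin.val_succ, Fin.val_zero] at *
    have := i.isLt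
    exact hx _ _ (by omega) (by omega) (by omega) (by omega)

theorem Xsum_pos {n k l m : ℕ} {x : ℕ → ℕ → ℚ} (hx : PositiveOnLattice n k x) (hl1 : 1 ≤ l)
    (hl : l ≤ k) (hkm : k < l + m) (hmn : l + m ≤ n + 1) : 0 < Xsum x n l m := by
  obtain ⟨L, rfl⟩ : ∃ L, l = L + 1 := ⟨l - 1, by omega⟩
  exact sum_pos (fun c hc => wtX_pos hx hl hkm hc) (pathsX_succ_nonempty (by omega))

theorem div_Xsum_add_div_Xsum {n k l m : ℕ} {x : ℕ → ℕ → ℚ} (hx : PositiveOnLattice n k x)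
    (hlk : l < k) (hkm : k < l + 1 + m) (hmn : l + m + 2 ≤ n + 1) :
    x (l + 1) m / Xsum x n (l + 1) m
        + x (l + 1) (m + 1) * Xsum x n l (m + 1) / (Xsum x n (l + 1) (m + 1) * Xsum x n (l + 1) m)
      = x (l + 1) (m + 1) / Xsum x n (l + 1) (m + 1) := by
  have h0 := hx (l + 1) m (by omega) hlk hkm (by omega)
  have h1 := hx (l + 1) (m + 1) (by omega) hlk (by omega) (by omega)
  have hX0 := Xsum_pos hx (by omega) hlk hkm (by omega)
  have hX1 := Xsum_pos hx (l := l + 1) (m := m + 1) (by omega) hlk (by omega) (by omega)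
  have key := Xsum_succ_eq_add x (n := n) (by omega) h0.ne' h1.ne'
  field_simp
  rw [key]
  field_simp
  ring

theorem Fin.strictMono_snoc {α : Type*} [Preorder α] {n : ℕ} {f : Fin (n + 1) → α} {a : α} :
    StrictMono (Fin.snoc f a : Fin (n + 2) → α) ↔ StrictMono f ∧ f (Fin.last n) < a := by
  simp only [Fin.strictMono_iff_lt_succ, Fin.forall_fin_succ', Fin.snoc_castSucc,
    Fin.succ_castSucc, Fin.snoc_last, Fin.succ_last]

/-- `pathsY n k l m` with the length `k - l` replaced by a free `L`, so that one can recurse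
on it. -/
def risingPaths (n L m : ℕ) : Finset (Fin (L + 1) → Fin (n + 2)) :=
  univ.filter fun c => (c 0 : ℕ) = 0 ∧ StrictMono c ∧ (c (Fin.last L) : ℕ) ≤ m

def risingPathSum (g : ℕ → ℕ → ℚ) (n L m : ℕ) : ℚ :=
  ∑ c ∈ risingPaths n L m, ∏ j : Fin L, g j (c j.succ)

theorem YstarSum_eq_risingPathSum (y : ℕ → ℕ → ℚ) (n k l m : ℕ) :
    YstarSum y n k l m
      = risingPathSum (fun j v => y (k - j - 1) v / y (k - j) (v - 1)) n (k - l) m :=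
  rfl

theorem snoc_mem_risingPaths {n L m : ℕ} {d : Fin (L + 1) → Fin (n + 2)} {a : Fin (n + 2)} :
    (Fin.snoc d a : Fin (L + 2) → Fin (n + 2)) ∈ risingPaths n (L + 1) m
      ↔ d ∈ risingPaths n L (a - 1) ∧ 0 < (a : ℕ) ∧ (a : ℕ) ≤ m := by
  have hzero : (Fin.snoc d a : Fin (L + 2) → Fin (n + 2)) 0 = d 0 := Fin.snoc_castSucc (i := 0) ..
  simp only [risingPaths, mem_filter, mem_univ, true_and, Fin.strictMono_snoc, Fin.snoc_last,
    Fin.lt_def, hzero]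
  constructor
  · rintro ⟨h0, ⟨hd, hlt⟩, hm⟩
    exact ⟨⟨h0, hd, by omega⟩, by omega, hm⟩
  · rintro ⟨⟨h0, hd, hle⟩, hpos, hm⟩
    exact ⟨h0, ⟨hd, by omega⟩, hm⟩

theorem risingPaths_zero (n m : ℕ) : risingPaths n 0 m = {fun _ => 0} := by
  ext c
  simp +contextual [risingPaths, Subsingleton.strictMono, funext_iff, Fin.forall_fin_one]

theorem risingPathSum_zero (g : ℕ → ℕ → ℚ) (n m : ℕ) : risingPathSum g n 0 m = 1 := by
  simp [risingPathSum, risingPaths_zero]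

theorem risingPathSum_succ (g : ℕ → ℕ → ℚ) {n L m : ℕ} (hm : m ≤ n + 1) :
    risingPathSum g n (L + 1) m = ∑ b ∈ Icc (L + 1) m, g L b * risingPathSum g n L (b - 1) := by
  have last_mem : ∀ c ∈ risingPaths n (L + 1) m, (c (Fin.last (L + 1)) : ℕ) ∈ Icc (L + 1) m := by
    intro c hc
    obtain ⟨h0, hmono, hlast⟩ := (mem_filter.1 hc).2
    have := Fin.val_add_sub_le_of_strictMono hmono (Fin.zero_le (Fin.last (L + 1)))
    simp only [Fin.val_last, Fin.val_zero] at this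
    exact mem_Icc.2 ⟨by omega, hlast⟩
  rw [risingPathSum, ← sum_fiberwise_of_maps_to last_mem]
  refine sum_congr rfl fun b hb => ?_
  have hb := mem_Icc.1 hb
  have hb' : b < n + 2 := by omega
  rw [risingPathSum, mul_sum]
  refine sum_nbij' Fin.init (fun d => Fin.snoc d (⟨b, hb'⟩ : Fin (n + 2))) ?_ ?_ ?_ ?_ ?_
  · intro c hc
    obtain ⟨hpath, rfl⟩ := mem_filter.1 hc
    rw [← Fin.snoc_init_self c] at hpath
    exact (snoc_mem_risingPaths.1 hpath).1
  · intro d hd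
    refine mem_filter.2 ⟨snoc_mem_risingPaths.2 ⟨hd, by simp only; omega, hb.2⟩, by simp⟩
  · intro c hc
    conv_rhs => rw [← Fin.snoc_init_self c]
    congr 1
    exact Fin.ext (mem_filter.1 hc).2.symm
  · intro d _
    exact Fin.init_snoc _ _
  · intro c hc
    obtain ⟨-, rfl⟩ := mem_filter.1 hc
    conv_lhs => rw [← Fin.snoc_init_self c]
    rw [Fin.prod_univ_castSucc, mul_comm]
    simp only [Fin.succ_castSucc, Fin.snoc_castSucc, Fin.succ_last, Fin.snoc_last, Fin.val_last,
      Fin.val_castSucc]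

theorem YstarSum_self (y : ℕ → ℕ → ℚ) (n k m : ℕ) : YstarSum y n k k m = 1 := by
  rw [YstarSum_eq_risingPathSum, Nat.sub_self, risingPathSum_zero]

theorem YstarSum_eq_sum (y : ℕ → ℕ → ℚ) {n k l m : ℕ} (hlk : l < k) (hm : m ≤ n + 1) :
    YstarSum y n k l m = ∑ j ∈ Icc (k - l) m,
      y l j / y (l + 1) (j - 1) * YstarSum y n k (l + 1) (j - 1) := by
  obtain ⟨L, hL⟩ : ∃ L, k - l = L + 1 := ⟨k - l - 1, by omega⟩
  have hL' : k - (l + 1) = L := by omega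
  rw [YstarSum_eq_risingPathSum, hL, risingPathSum_succ _ hm]
  refine sum_congr rfl fun j _ => ?_
  rw [YstarSum_eq_risingPathSum, hL', show k - L - 1 = l by omega, show k - L = l + 1 by omega]

section

variable {n k : ℕ} {x : ℕ → ℕ → ℚ}

theorem XE_eq_Xsum {l m : ℕ} (hlk : l ≤ k) (hkm : k < l + m) : XE x n k l m = Xsum x n l m := by
  rw [XE, if_neg (by omega), if_neg (by omega)]

theorem XE_of_add_eq {l m : ℕ} (h : l + m = k) : XE x n k l m = (x 1 n)⁻¹ := by
  rw [XE, if_neg (by omega), if_pos h]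

theorem XE_succ_self (m : ℕ) : XE x n k (k + 1) m = 1 := by
  rw [XE, if_pos (Nat.lt_succ_self k)]

theorem XE_pos (hx : PositiveOnLattice n k x) (hk : 1 ≤ k) (hkn : k ≤ n) {l m : ℕ}
    (hl1 : 1 ≤ l) (hlk : l ≤ k + 1) (hkm : k ≤ l + m) (hmn : l + m ≤ n + 1) :
    0 < XE x n k l m := by
  obtain rfl | hlk := eq_or_lt_of_le hlk
  · rw [XE_succ_self]; exact one_pos
  obtain hkm | hkm := eq_or_lt_of_le hkm
  · rw [XE_of_add_eq hkm.symm]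
    exact inv_pos.2 (hx 1 n le_rfl hk (by omega) (by omega))
  · rw [XE_eq_Xsum (by omega) hkm]
    exact Xsum_pos hx hl1 (by omega) hkm hmn

theorem SigmaMap_pos (hx : PositiveOnLattice n k x) (hk : 1 ≤ k) (hkn : k ≤ n) {l m : ℕ}
    (hl1 : 1 ≤ l) (hlk : l ≤ k) (hkm : k ≤ l + m) (hmn : l + m ≤ n) :
    0 < SigmaMap x n k l m := by
  have hx' : 0 < if l + 1 ≤ k then x (l + 1) m else 1 := by
    split_ifs
    · exact hx _ _ (by omega) (by omega) (by omega) (by omega)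
    · exact one_pos
  exact mul_pos hx' (div_pos (XE_pos hx hk hkn hl1 (by omega) hkm (by omega))
    (XE_pos hx hk hkn (by omega) (by omega) (by omega) (by omega)))

theorem SigmaMap_div_XE (hx : PositiveOnLattice n k x) (hk : 1 ≤ k) (hkn : k ≤ n) {l m : ℕ}
    (hl1 : 1 ≤ l) (hlk : l < k) (hkm : k ≤ l + m) (hmn : l + m ≤ n) :
    SigmaMap x n k l m / XE x n k l m = x (l + 1) m / Xsum x n (l + 1) m := by
  have hXE := (XE_pos hx hk hkn hl1 (by omega) hkm (by omega)).ne'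
  rw [SigmaMap, if_pos (Nat.succ_le_of_lt hlk), XE_eq_Xsum (l := l + 1) hlk (by omega)]
  field_simp

theorem sum_Icc_SigmaMap_div_XE (hx : PositiveOnLattice n k x) (hk : 1 ≤ k) (hkn : k ≤ n)
    {l m : ℕ} (hl1 : 1 ≤ l) (hlk : l < k) (hkm : k - l ≤ m) (hmn : l + m ≤ n) :
    ∑ j ∈ Icc (k - l) m, SigmaMap x n k l j / XE x n k (l + 1) (j - 1)
      = x (l + 1) m / Xsum x n (l + 1) m := by
  induction m, hkm using Nat.le_induction with
  | base =>
    rw [Icc_self, sum_singleton, XE_of_add_eq (l := l + 1) (m := k - l - 1) (by omega),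
      ← XE_of_add_eq (x := x) (n := n) (k := k) (l := l) (m := k - l) (by omega),
      SigmaMap_div_XE hx hk hkn hl1 hlk (by omega) hmn]
  | succ m hkm ih =>
    rw [sum_Icc_succ_top (by omega), ih (by omega), Nat.add_sub_cancel, SigmaMap,
      if_pos (Nat.succ_le_of_lt hlk), XE_eq_Xsum (l := l) (m := m + 1) (by omega) (by omega),
      XE_eq_Xsum (l := l + 1) (m := m + 1) hlk (by omega),
      XE_eq_Xsum (l := l + 1) (m := m) hlk (by omega),
      ← div_Xsum_add_div_Xsum hx hlk (by omega) (by omega)]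
    ring

theorem YstarSum_SigmaMap (hx : PositiveOnLattice n k x) (hk : 1 ≤ k) (hkn : k ≤ n) {l : ℕ}
    (hl1 : 1 ≤ l) (hlk : l ≤ k) {m : ℕ} (hkm : k ≤ l + m) (hmn : l + m ≤ n) :
    YstarSum (SigmaMap x n k) n k l m = SigmaMap x n k l m / XE x n k l m := by
  induction hlk using Nat.decreasingInduction generalizing m with
  | self =>
    have hXE := (XE_pos hx hk hkn hk le_self_add hkm (by omega)).ne'
    rw [YstarSum_self, SigmaMap, if_neg (Nat.not_succ_le_self k), XE_succ_self, one_mul, div_one,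
      div_self hXE]
  | of_succ l hlk ih =>
    have hterm : ∀ j ∈ Icc (k - l) m,
        SigmaMap x n k l j / SigmaMap x n k (l + 1) (j - 1)
            * YstarSum (SigmaMap x n k) n k (l + 1) (j - 1)
          = SigmaMap x n k l j / XE x n k (l + 1) (j - 1) := by
      intro j hj
      have hj := mem_Icc.1 hj
      rw [ih (by omega) (by omega) (by omega), div_mul_div_cancel₀
        (SigmaMap_pos hx hk hkn (by omega) hlk (by omega) (by omega)).ne']
    rw [YstarSum_eq_sum _ hlk (by omega), sum_congr rfl hterm,
      sum_Icc_SigmaMap_div_XE hx hk hkn hl1 hlk (by omega) hmn,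
      SigmaMap_div_XE hx hk hkn hl1 hlk hkm hmn]

end

theorem YstarE_SigmaMap_zero (x : ℕ → ℕ → ℚ) (n k m : ℕ) :
    YstarE (SigmaMap x n k) n k 0 m = x 1 n := by
  rw [YstarE, if_pos rfl, SigmaMap, if_neg (Nat.not_succ_le_self k), XE_of_add_eq (add_zero k),
    XE_succ_self, one_mul, div_one, inv_inv]

/-- the key inductive identity
`x^{(l)}_m = X^{(l)}_m(x) ⬝ Y^{*(l-1)}_m(Σ(x))` for all `1 ≤ l ≤ k < l+m ≤ n+1`. -/
theorem stmt4 (n k : ℕ) (hk : 1 ≤ k) (hkn : k ≤ n) (x : ℕ → ℕ → ℚ)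
    (hx : ∀ l m, 1 ≤ l → l ≤ k → k < l + m → l + m ≤ n + 1 → 0 < x l m) :
    ∀ l m, 1 ≤ l → l ≤ k → k < l + m → l + m ≤ n + 1 →
      x l m = Xsum x n l m * YstarE (SigmaMap x n k) n k (l - 1) m := by
  intro l m hl1 hlk hkm hmn
  have hX := (Xsum_pos hx hl1 hlk hkm hmn).ne'
  obtain ⟨l, rfl⟩ : ∃ l', l = l' + 1 := ⟨l - 1, by omega⟩
  rw [Nat.add_sub_cancel]
  rcases Nat.eq_zero_or_pos l with rfl | hl
  · rw [YstarE_SigmaMap_zero, zero_add, Xsum_one x (by omega),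
      div_mul_cancel₀ _ (hx 1 n le_rfl hk (by omega) (by omega)).ne']
  · rw [YstarE, if_neg hl.ne', YstarSum_SigmaMap hx hk hkn hl (by omega) (by omega) (by omega),
      SigmaMap_div_XE hx hk hkn hl (by omega) (by omega) (by omega), mul_div_cancel₀ _ hX]
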